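/- Let M = [m_{ij}] be an n×n real Nekrasov matrix with m_{ii} > 0 for all i, let q ∈ ℝⁿ, and let x* be a solution of LCP(M,q). Then for every x ∈ ℝⁿ, ‖x − x*‖_∞ ≤ (max_{1 ≤ i ≤ n} η_i(M)/min{m_{ii} − h_i(M), 1}) · ‖r(x)‖_∞. -/

import Mathlib

open Finset

noncomputable def nekH {n : ℕ} {𝕜 : Type*} [RCLike 𝕜] (A : Matrix (Fin n) (Fin n) 𝕜) : Fin n → ℝ
  | i =>
    (∑ j : Fin n, if h : j < i then ‖A i j‖ / ‖A j j‖ * nekH A j else 0)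
      + ∑ j : Fin n, if i < j then ‖A i j‖ else 0
termination_by i => i.val
decreasing_by exact h

def IsNekrasov {n : ℕ} {𝕜 : Type*} [RCLike 𝕜] (A : Matrix (Fin n) (Fin n) 𝕜) : Prop :=
  ∀ i, nekH A i < ‖A i i‖

noncomputable def nekZ {n : ℕ} {𝕜 : Type*} [RCLike 𝕜] (A : Matrix (Fin n) (Fin n) 𝕜) : Fin n → ℝ
  | i => (∑ j : Fin n, if h : j < i then ‖A i j‖ / ‖A j j‖ * nekZ A j else 0) + 1
termination_by i => i.val
decreasing_by exact h

noncomputable def nekEta {n : ℕ} {𝕜 : Type*} [RCLike 𝕜] (M : Matrix (Fin n) (Fin n) 𝕜) : Fin n → ℝ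
  | i => (∑ j : Fin n, if h : j < i then ‖M i j‖ / min ‖M j j‖ 1 * nekEta M j else 0) + 1
termination_by i => i.val
decreasing_by exact h

noncomputable def linftyNorm {n : ℕ} {𝕜 : Type*} [RCLike 𝕜] (A : Matrix (Fin n) (Fin n) 𝕜) : ℝ :=
  ⨆ i, ∑ j, ‖A i j‖

noncomputable def rPlus {n : ℕ} (M : Matrix (Fin n) (Fin n) ℝ) (i : Fin n) : ℝ :=
  Finset.fold max 0 (fun j => M i j) (Finset.univ.erase i)

noncomputable def BPlus {n : ℕ} (M : Matrix (Fin n) (Fin n) ℝ) : Matrix (Fin n) (Fin n) ℝ :=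
  Matrix.of fun i j => M i j - rPlus M i

def IsBNekrasov {n : ℕ} (M : Matrix (Fin n) (Fin n) ℝ) : Prop :=
  IsNekrasov (BPlus M) ∧ ∀ i, 0 < BPlus M i i

def IsLCPSolution {n : ℕ} (M : Matrix (Fin n) (Fin n) ℝ) (q x : Fin n → ℝ) : Prop :=
  (∀ i, 0 ≤ x i) ∧ (∀ i, 0 ≤ (M.mulVec x + q) i) ∧ ∑ i, (M.mulVec x + q) i * x i = 0

def IsPMatrix {n : ℕ} (M : Matrix (Fin n) (Fin n) ℝ) : Prop :=
  ∀ S : Finset (Fin n), 0 < (M.submatrix (fun i : S => (i : Fin n)) (fun j : S => (j : Fin n))).det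


/-!
Write `u = x - x*` and `w = M x + q`. Since `min (x*, M x* + q) = 0`, each coordinate of the
residual, `min (xᵢ, wᵢ) - min (x*ᵢ, w*ᵢ)`, lies between `uᵢ` and `(M u)ᵢ`, so
`r(x) = (I - D + D M) u` for a diagonal `D` with entries in `[0, 1]`.
For any `A` with nonzero diagonal, forward substitution along the Nekrasov recursion gives
`|aᵢᵢ| |uᵢ| ≤ hᵢ(A) ‖u‖ + zᵢ(A) ‖A u‖`, where `zᵢ` is the recursion of `hᵢ` with the upper row sum
replaced by `1`; at an index with `|uᵢ| = ‖u‖` this reads `(|aᵢᵢ| - hᵢ(A)) ‖u‖ ≤ zᵢ(A) ‖A u‖`.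
For `A = I - D + D M` the diagonal stays above `min (mᵢᵢ, 1)` while `hᵢ(A) ≤ dᵢ hᵢ(M)`, whence
`aᵢᵢ - hᵢ(A) ≥ min (mᵢᵢ - hᵢ(M), 1)` and `zᵢ(A) ≤ ηᵢ(M)`.
-/

open Matrix

section Nekrasov

variable {𝕜 : Type*} [RCLike 𝕜] {n : ℕ}

lemma nekH_eq (A : Matrix (Fin n) (Fin n) 𝕜) (i : Fin n) :
    nekH A i = (∑ j, if j < i then ‖A i j‖ / ‖A j j‖ * nekH A j else 0)
      + ∑ j, if i < j then ‖A i j‖ else 0 := by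
  rw [nekH]; simp only [dite_eq_ite]

lemma nekZ_eq (A : Matrix (Fin n) (Fin n) 𝕜) (i : Fin n) :
    nekZ A i = (∑ j, if j < i then ‖A i j‖ / ‖A j j‖ * nekZ A j else 0) + 1 := by
  rw [nekZ]; simp only [dite_eq_ite]

lemma nekEta_eq (M : Matrix (Fin n) (Fin n) 𝕜) (i : Fin n) :
    nekEta M i = (∑ j, if j < i then ‖M i j‖ / min ‖M j j‖ 1 * nekEta M j else 0) + 1 := by
  rw [nekEta]; simp only [dite_eq_ite]

lemma nekH_nonneg (A : Matrix (Fin n) (Fin n) 𝕜) (i : Fin n) : 0 ≤ nekH A i := by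
  induction i using WellFoundedLT.induction with
  | _ i ih =>
    rw [nekH_eq]
    refine add_nonneg (sum_nonneg fun j _ => ?_) (sum_nonneg fun j _ => by positivity)
    split_ifs with hj
    exacts [mul_nonneg (by positivity) (ih j hj), le_rfl]

lemma nekZ_nonneg (A : Matrix (Fin n) (Fin n) 𝕜) (i : Fin n) : 0 ≤ nekZ A i := by
  induction i using WellFoundedLT.induction with
  | _ i ih =>
    rw [nekZ_eq]
    refine add_nonneg (sum_nonneg fun j _ => ?_) zero_le_one
    split_ifs with hj
    exacts [mul_nonneg (by positivity) (ih j hj), le_rfl]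

lemma nekEta_nonneg (M : Matrix (Fin n) (Fin n) 𝕜) (i : Fin n) : 0 ≤ nekEta M i := by
  induction i using WellFoundedLT.induction with
  | _ i ih =>
    rw [nekEta_eq]
    refine add_nonneg (sum_nonneg fun j _ => ?_) zero_le_one
    split_ifs with hj
    exacts [mul_nonneg (by positivity) (ih j hj), le_rfl]

lemma Fin.sum_eq_sum_lt_add_add_sum_gt {M : Type*} [AddCommMonoid M] (f : Fin n → M)
    (i : Fin n) :
    ∑ j, f j = (∑ j, if j < i then f j else 0) + f i + ∑ j, if i < j then f j else 0 := by
  have hf : ∀ j, f j = (if j < i then f j else 0) + (if j = i then f j else 0)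
      + (if i < j then f j else 0) := by
    intro j
    rcases lt_trichotomy j i with h | rfl | h
    · simp [h, h.ne, h.not_gt]
    · simp
    · simp [h, h.ne', h.not_gt]
  rw [sum_congr rfl fun j _ => hf j, sum_add_distrib, sum_add_distrib, sum_ite_eq']
  simp

lemma norm_sum_lower_le (A : Matrix (Fin n) (Fin n) 𝕜) (hA : ∀ j, A j j ≠ 0)
    (u : Fin n → 𝕜) (i : Fin n)
    (ih : ∀ j < i, ‖A j j‖ * ‖u j‖ ≤ nekH A j * ‖u‖ + nekZ A j * ‖A *ᵥ u‖) :
    ‖∑ j, if j < i then A i j * u j else 0‖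
      ≤ (∑ j, if j < i then ‖A i j‖ / ‖A j j‖ * nekH A j else 0) * ‖u‖
        + (∑ j, if j < i then ‖A i j‖ / ‖A j j‖ * nekZ A j else 0) * ‖A *ᵥ u‖ := by
  rw [sum_mul, sum_mul, ← sum_add_distrib]
  refine (norm_sum_le _ _).trans (sum_le_sum fun j _ => ?_)
  split_ifs with hj
  · have hAjj : 0 < ‖A j j‖ := norm_pos_iff.mpr (hA j)
    have huj : ‖u j‖ ≤ (nekH A j * ‖u‖ + nekZ A j * ‖A *ᵥ u‖) / ‖A j j‖ :=
      (le_div_iff₀' hAjj).mpr (ih j hj)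
    calc ‖A i j * u j‖ = ‖A i j‖ * ‖u j‖ := norm_mul _ _
      _ ≤ ‖A i j‖ * ((nekH A j * ‖u‖ + nekZ A j * ‖A *ᵥ u‖) / ‖A j j‖) := by gcongr
      _ = _ := by ring
  · simp

lemma norm_sum_upper_le (A : Matrix (Fin n) (Fin n) 𝕜) (u : Fin n → 𝕜) (i : Fin n) :
    ‖∑ j, if i < j then A i j * u j else 0‖ ≤ (∑ j, if i < j then ‖A i j‖ else 0) * ‖u‖ := by
  rw [sum_mul]
  refine (norm_sum_le _ _).trans (sum_le_sum fun j _ => ?_)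
  split_ifs
  · rw [norm_mul]; gcongr; exact norm_le_pi_norm u j
  · simp

lemma norm_diag_mul_norm_le (A : Matrix (Fin n) (Fin n) 𝕜) (hA : ∀ j, A j j ≠ 0)
    (u : Fin n → 𝕜) (i : Fin n) :
    ‖A i i‖ * ‖u i‖ ≤ nekH A i * ‖u‖ + nekZ A i * ‖A *ᵥ u‖ := by
  induction i using WellFoundedLT.induction with
  | _ i ih =>
    have hsplit : A i i * u i = (A *ᵥ u) i - (∑ j, if j < i then A i j * u j else 0)
        - ∑ j, if i < j then A i j * u j else 0 := by
      rw [mulVec, dotProduct, Fin.sum_eq_sum_lt_add_add_sum_gt _ i]; ring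
    have hlt := norm_sum_lower_le A hA u i ih
    have hgt := norm_sum_upper_le A u i
    have hAu := norm_le_pi_norm (A *ᵥ u) i
    rw [← norm_mul, hsplit, nekH_eq, nekZ_eq]
    calc _ ≤ ‖(A *ᵥ u) i‖ + ‖∑ j, if j < i then A i j * u j else 0‖
          + ‖∑ j, if i < j then A i j * u j else 0‖ :=
          (norm_sub_le _ _).trans (by gcongr; exact norm_sub_le _ _)
      _ ≤ _ := by nlinarith [norm_nonneg u]

lemma sub_nekH_mul_norm_le (A : Matrix (Fin n) (Fin n) 𝕜) (hA : ∀ j, A j j ≠ 0)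
    {u : Fin n → 𝕜} {i : Fin n} (hi : ‖u i‖ = ‖u‖) :
    (‖A i i‖ - nekH A i) * ‖u‖ ≤ nekZ A i * ‖A *ᵥ u‖ := by
  have := norm_diag_mul_norm_le A hA u i
  rw [hi] at this
  linarith

end Nekrasov

lemma Pi.exists_norm_apply_eq_norm {ι E : Type*} [Fintype ι] [Nonempty ι] [SeminormedAddGroup E]
    (u : ι → E) : ∃ i, ‖u i‖ = ‖u‖ := by
  obtain ⟨i, -, hi⟩ := exists_mem_eq_sup univ univ_nonempty fun j => ‖u j‖₊
  exact ⟨i, by rw [Pi.norm_def, hi]; rfl⟩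

def interpMatrix {n : ℕ} (M : Matrix (Fin n) (Fin n) ℝ) (d : Fin n → ℝ) :
    Matrix (Fin n) (Fin n) ℝ :=
  diagonal (1 - d) + diagonal d * M

section InterpMatrix

variable {n : ℕ} (M : Matrix (Fin n) (Fin n) ℝ) {d : Fin n → ℝ}

lemma interpMatrix_apply_self (i : Fin n) : interpMatrix M d i i = 1 - d i + d i * M i i := by
  simp [interpMatrix]

lemma interpMatrix_apply_of_ne {i j : Fin n} (h : i ≠ j) : interpMatrix M d i j = d i * M i j := by
  simp [interpMatrix, h]

lemma interpMatrix_mulVec (u : Fin n → ℝ) (i : Fin n) :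
    (interpMatrix M d *ᵥ u) i = (1 - d i) * u i + d i * (M *ᵥ u) i := by
  simp [interpMatrix, add_mulVec, ← mulVec_mulVec, mulVec_diagonal]

variable (hd : ∀ i, d i ∈ Set.Icc (0 : ℝ) 1)
include hd

lemma min_le_interpMatrix_apply_self (i : Fin n) : min (M i i) 1 ≤ interpMatrix M d i i := by
  rw [interpMatrix_apply_self]
  obtain ⟨h0, h1⟩ := hd i
  nlinarith [min_le_left (M i i) 1, min_le_right (M i i) 1]

variable (hM : ∀ i, 0 < M i i)
include hM

lemma interpMatrix_apply_self_pos (i : Fin n) : 0 < interpMatrix M d i i :=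
  (lt_min (hM i) one_pos).trans_le (min_le_interpMatrix_apply_self M hd i)

lemma nekH_interpMatrix_le (i : Fin n) : nekH (interpMatrix M d) i ≤ d i * nekH M i := by
  induction i using WellFoundedLT.induction with
  | _ i ih =>
    rw [nekH_eq, nekH_eq, mul_add, mul_sum, mul_sum]
    gcongr with j _ j _
    · split_ifs with hji
      · have hAjj := interpMatrix_apply_self_pos M hd hM j
        have hratio : nekH (interpMatrix M d) j / interpMatrix M d j j ≤ nekH M j / M j j := by
          rw [div_le_div_iff₀ hAjj (hM j), interpMatrix_apply_self]
          obtain ⟨h0, h1⟩ := hd j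
          nlinarith [ih j hji, nekH_nonneg M j, hM j]
        rw [interpMatrix_apply_of_ne M hji.ne', Real.norm_of_nonneg hAjj.le,
          Real.norm_of_nonneg (hM j).le, norm_mul, Real.norm_of_nonneg (hd i).1]
        calc d i * ‖M i j‖ / interpMatrix M d j j * nekH (interpMatrix M d) j
            = d i * ‖M i j‖ * (nekH (interpMatrix M d) j / interpMatrix M d j j) := by ring
          _ ≤ d i * ‖M i j‖ * (nekH M j / M j j) := by
            gcongr
            exact mul_nonneg (hd i).1 (norm_nonneg _)
          _ = d i * (‖M i j‖ / M j j * nekH M j) := by ring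
      · simp
    · split_ifs with hij
      · rw [interpMatrix_apply_of_ne M hij.ne, norm_mul, Real.norm_of_nonneg (hd i).1]
      · simp

lemma nekZ_interpMatrix_le_nekEta (i : Fin n) : nekZ (interpMatrix M d) i ≤ nekEta M i := by
  induction i using WellFoundedLT.induction with
  | _ i ih =>
    rw [nekZ_eq, nekEta_eq]
    gcongr with j _
    split_ifs with hji
    · have hAjj := interpMatrix_apply_self_pos M hd hM j
      have hmin : min ‖M j j‖ 1 ≤ interpMatrix M d j j := by
        rw [Real.norm_of_nonneg (hM j).le]; exact min_le_interpMatrix_apply_self M hd j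
      have hMij : ‖interpMatrix M d i j‖ ≤ ‖M i j‖ := by
        rw [interpMatrix_apply_of_ne M hji.ne', norm_mul, Real.norm_of_nonneg (hd i).1]
        exact mul_le_of_le_one_left (norm_nonneg _) (hd i).2
      rw [Real.norm_of_nonneg hAjj.le, div_mul_eq_mul_div, div_mul_eq_mul_div]
      have hmin_pos : 0 < min ‖M j j‖ 1 := lt_min (norm_pos_iff.mpr (hM j).ne') one_pos
      gcongr
      · exact mul_nonneg (norm_nonneg _) (nekEta_nonneg M j)
      · exact nekZ_nonneg _ j
      · exact ih j hji
    · rfl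

lemma min_sub_nekH_le_interpMatrix (i : Fin n) :
    min (M i i - nekH M i) 1 ≤ interpMatrix M d i i - nekH (interpMatrix M d) i := by
  have hH := nekH_interpMatrix_le M hd hM i
  rw [interpMatrix_apply_self]
  obtain ⟨h0, h1⟩ := hd i
  nlinarith [min_le_left (M i i - nekH M i) 1, min_le_right (M i i - nekH M i) 1]

lemma min_sub_nekH_mul_norm_le {u : Fin n → ℝ} {i : Fin n} (hi : ‖u i‖ = ‖u‖) :
    min (M i i - nekH M i) 1 * ‖u‖ ≤ nekEta M i * ‖interpMatrix M d *ᵥ u‖ :=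
  calc min (M i i - nekH M i) 1 * ‖u‖
      ≤ (‖interpMatrix M d i i‖ - nekH (interpMatrix M d) i) * ‖u‖ := by
        rw [Real.norm_of_nonneg (interpMatrix_apply_self_pos M hd hM i).le]
        gcongr
        exact min_sub_nekH_le_interpMatrix M hd hM i
    _ ≤ nekZ (interpMatrix M d) i * ‖interpMatrix M d *ᵥ u‖ :=
        sub_nekH_mul_norm_le _ (fun j => (interpMatrix_apply_self_pos M hd hM j).ne') hi
    _ ≤ nekEta M i * ‖interpMatrix M d *ᵥ u‖ := by
        gcongr
        exact nekZ_interpMatrix_le_nekEta M hd hM i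

end InterpMatrix

lemma exists_min_sub_min_eq (a b c e : ℝ) :
    ∃ t ∈ Set.Icc (0 : ℝ) 1, min a b - min c e = (1 - t) * (a - c) + t * (b - e) := by
  have hmem : min a b - min c e ∈ segment ℝ (a - c) (b - e) := by
    rw [segment_eq_uIcc, Set.uIcc, Set.mem_Icc]
    constructor <;> grind
  obtain ⟨s, t, hs, ht, hst, h⟩ := hmem
  refine ⟨t, ⟨ht, by linarith⟩, ?_⟩
  rw [← h, ← hst]
  simp only [smul_eq_mul]
  ring

lemma IsLCPSolution.min_eq_zero {n : ℕ} {M : Matrix (Fin n) (Fin n) ℝ} {q x : Fin n → ℝ}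
    (hx : IsLCPSolution M q x) (i : Fin n) : min (x i) ((M *ᵥ x + q) i) = 0 := by
  obtain ⟨hx0, hw0, hcomp⟩ := hx
  have hprod := (sum_eq_zero_iff_of_nonneg fun j _ => mul_nonneg (hw0 j) (hx0 j)).mp hcomp i
    (mem_univ i)
  rcases mul_eq_zero.mp hprod with h | h
  · rw [h]; exact min_eq_right (hx0 i)
  · rw [h]; exact min_eq_left (hw0 i)

lemma IsLCPSolution.exists_min_eq_interpMatrix_mulVec {n : ℕ} {M : Matrix (Fin n) (Fin n) ℝ}
    {q xstar : Fin n → ℝ} (hsol : IsLCPSolution M q xstar) (x : Fin n → ℝ) :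
    ∃ d : Fin n → ℝ, (∀ i, d i ∈ Set.Icc (0 : ℝ) 1) ∧
      (fun i => min (x i) ((M *ᵥ x + q) i)) = interpMatrix M d *ᵥ (x - xstar) := by
  choose d hd hmin using fun i =>
    exists_min_sub_min_eq (x i) ((M *ᵥ x + q) i) (xstar i) ((M *ᵥ xstar + q) i)
  refine ⟨d, hd, funext fun i => ?_⟩
  rw [interpMatrix_mulVec, ← sub_zero (min _ _), ← hsol.min_eq_zero i, hmin, mulVec_sub]
  simp only [Pi.add_apply, Pi.sub_apply]
  ring

theorem stmt17 {n : ℕ} (hn : 0 < n) (M : Matrix (Fin n) (Fin n) ℝ)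
    (hdiag : ∀ i, 0 < M i i) (hNek : IsNekrasov M)
    (q xstar : Fin n → ℝ) (hsol : IsLCPSolution M q xstar) (x : Fin n → ℝ) :
    ‖x - xstar‖ ≤
      (Finset.univ.sup' ⟨⟨0, hn⟩, Finset.mem_univ _⟩
        (fun i => nekEta M i / min (M i i - nekH M i) 1)) *
      ‖fun i => min (x i) ((M.mulVec x + q) i)‖ := by
  obtain ⟨d, hd, hr⟩ := hsol.exists_min_eq_interpMatrix_mulVec x
  have : Nonempty (Fin n) := ⟨⟨0, hn⟩⟩
  obtain ⟨i, hi⟩ := Pi.exists_norm_apply_eq_norm (x - xstar)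
  have hgap : 0 < min (M i i - nekH M i) 1 := by
    have := hNek i
    rw [Real.norm_of_nonneg (hdiag i).le] at this
    exact lt_min (sub_pos.mpr this) one_pos
  rw [hr]
  calc ‖x - xstar‖
      ≤ nekEta M i / min (M i i - nekH M i) 1 * ‖interpMatrix M d *ᵥ (x - xstar)‖ := by
        rw [div_mul_eq_mul_div, le_div_iff₀' hgap]
        exact min_sub_nekH_mul_norm_le M hd hdiag hi
    _ ≤ _ := by
        gcongr
        exact le_sup' (fun i => nekEta M i / min (M i i - nekH M i) 1) (mem_univ i)
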